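/- Let x ≥ 0 and y be integers, and let G_0 be a graph of minimum order in the nonempty family M(x,y). Then the independence number of G_0 is less than 3. -/

import Mathlib

/-- The independence number of `G`: the clique number of the complement. -/
noncomputable def indepNum {V : Type*} (G : SimpleGraph V) : ℕ := Gᶜ.cliqueNum

/-- The chromatic number of `G` as a natural number. -/
noncomputable def chi {V : Type*} (G : SimpleGraph V) : ℕ := G.chromaticNumber.toNat

/-- `f(G) = χ(G) − cl(G)`. -/
noncomputable def fDiff {V : Type*} (G : SimpleGraph V) : ℕ := chi G - G.cliqueNum

/-- Membership in the family `M(x,y) = {G : |V(G)| < χ(G) + 2f(G) − x and f(G) ≤ y}`. -/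
def inM (x y : ℤ) {V : Type*} [Fintype V] (G : SimpleGraph V) : Prop :=
  (Fintype.card V : ℤ) < chi G + 2 * fDiff G - x ∧ (fDiff G : ℤ) ≤ y

/-- The set of orders of members of `M(x,y)`. -/
def McardSet (x y : ℤ) : Set ℕ := {n | ∃ G : SimpleGraph (Fin n), inM x y G}

/-!
Suppose `G₀` has an independent set `I` of size three, and let `ω` be its clique number.
Deleting `I` lowers `χ` and `ω` by at most one each, so `χ + 2f = 3χ - 2ω` drops by at most
three while the order drops by exactly three: if `f(G₀ - I) ≤ y`, then `G₀ - I` is a smaller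
member of `M(x,y)`. Otherwise `f` went up, which forces `χ(G₀ - I) = χ(G₀)`. A maximum clique
meets `I` in at most one vertex, so some `a ∈ I` lies outside it, and then `G₀ - a` has the
same `χ` and `ω` as `G₀` and is again a smaller member of `M(x,y)`.
-/

namespace SimpleGraph

variable {V W : Type*} {G : SimpleGraph V} {H : SimpleGraph W}

lemma Embedding.cliqueNum_le [Finite W] (f : G ↪g H) : G.cliqueNum ≤ H.cliqueNum := by
  classical
  obtain ⟨s, hs⟩ := G.exists_isNClique_cliqueNum
  have hclique : H.IsClique (s.map f.toEmbedding : Set W) := by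
    rw [Finset.coe_map]
    rintro _ ⟨a, ha, rfl⟩ _ ⟨b, hb, rfl⟩ hab
    exact f.map_adj_iff.2 (hs.isClique ha hb (ne_of_apply_ne _ hab))
  simpa [hs.card_eq] using hclique.card_le_cliqueNum

lemma Iso.cliqueNum_eq [Finite V] [Finite W] (e : G ≃g H) : G.cliqueNum = H.cliqueNum :=
  le_antisymm e.toEmbedding.cliqueNum_le e.symm.toEmbedding.cliqueNum_le

lemma IsClique.card_le_cliqueNum_induce [Finite V] {s : Set V} {K : Finset V}
    (hK : G.IsClique K) (hKs : ↑K ⊆ s) : K.card ≤ (G.induce s).cliqueNum := by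
  classical
  have hmap : (K.subtype (· ∈ s)).map (.subtype _) = K :=
    Finset.subtype_map_of_mem fun _ hv => hKs hv
  have hclique : (G.induce s).IsClique (K.subtype (· ∈ s) : Set s) := by
    rw [isClique_induce_iff]
    exact hK.subset (by rintro _ ⟨v, hv, rfl⟩; exact Finset.mem_subtype.1 hv)
  rw [← hmap, Finset.card_map]
  exact hclique.card_le_cliqueNum

lemma IsClique.inter_subsingleton_of_isIndepSet {K I : Set V} (hK : G.IsClique K)
    (hI : G.IsIndepSet I) : (K ∩ I).Subsingleton :=
  fun _ ha _ hb => by_contra fun hab => hI ha.2 hb.2 hab (hK ha.1 hb.1 hab)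

lemma IsIndepSet.exists_mem_notMem_of_isClique {I K : Finset V} (hI : G.IsIndepSet I)
    (hK : G.IsClique K) (hI2 : 1 < I.card) : ∃ a ∈ I, a ∉ K := by
  by_contra! hIK
  have hsub : (I : Set V) ⊆ ↑K ∩ ↑I := fun a ha => ⟨hIK a ha, ha⟩
  exact (Finset.one_lt_card_iff_nontrivial.1 hI2).not_subsingleton
    ((hK.inter_subsingleton_of_isIndepSet hI).anti hsub)

lemma cliqueNum_le_cliqueNum_induce_compl_add_one [Finite V] {I : Set V}
    (hI : G.IsIndepSet I) : G.cliqueNum ≤ (G.induce Iᶜ).cliqueNum + 1 := by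
  classical
  obtain ⟨K, hK⟩ := G.exists_isNClique_cliqueNum
  have hin : (K.filter (· ∈ I)).card ≤ 1 :=
    Finset.card_le_one.2 fun a ha b hb =>
      hK.isClique.inter_subsingleton_of_isIndepSet hI (Finset.mem_filter.1 ha)
        (Finset.mem_filter.1 hb)
  have hout : (K.filter (· ∉ I)).card ≤ (G.induce Iᶜ).cliqueNum :=
    (hK.isClique.subset (Finset.coe_subset.2 (Finset.filter_subset _ _))).card_le_cliqueNum_induce
      fun v hv => (Finset.mem_filter.1 hv).2
  rw [← hK.card_eq, ← Finset.card_filter_add_card_filter_not (p := (· ∈ I))]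
  omega

end SimpleGraph

section Chi

open SimpleGraph

variable {V W : Type*} {G : SimpleGraph V} {H : SimpleGraph W}

lemma colorable_chi [Finite V] (G : SimpleGraph V) : G.Colorable (chi G) :=
  G.colorable_chromaticNumber_of_fintype

lemma chi_le_of_colorable {n : ℕ} (h : G.Colorable n) : chi G ≤ n :=
  ENat.toNat_le_of_le_natCast h.chromaticNumber_le

lemma chi_le_of_hom [Finite W] (f : G →g H) : chi G ≤ chi H :=
  chi_le_of_colorable ((colorable_chi H).of_hom f)

lemma chi_congr (e : G ≃g H) : chi G = chi H := by
  rw [chi, chi, chromaticNumber_congr e]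

lemma cliqueNum_le_chi [Finite V] (G : SimpleGraph V) : G.cliqueNum ≤ chi G := by
  have hchi : (chi G : ℕ∞) = G.chromaticNumber :=
    ENat.natCast_toNat (chromaticNumber_ne_top_iff_exists.2 ⟨_, colorable_chi G⟩)
  exact_mod_cast hchi ▸ G.cliqueNum_le_chromaticNumber

lemma chi_le_chi_induce_compl_add_one [Finite V] {I : Set V} (hI : G.IsIndepSet I) :
    chi G ≤ chi (G.induce Iᶜ) + 1 := by
  classical
  obtain ⟨C⟩ := colorable_chi (G.induce Iᶜ)
  refine chi_le_of_colorable ⟨Coloring.mk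
    (fun v => if hv : v ∈ I then Fin.last _ else (C ⟨v, hv⟩).castSucc) ?_⟩
  intro v w hvw
  by_cases hv : v ∈ I <;> by_cases hw : w ∈ I <;> simp only [hv, hw, dite_true, dite_false]
  · exact absurd hvw (hI hv hw hvw.ne)
  · exact (Fin.castSucc_lt_last _).ne'
  · exact (Fin.castSucc_lt_last _).ne
  · exact fun h => C.valid (G := G.induce Iᶜ) (v := ⟨v, hv⟩) (w := ⟨w, hw⟩) hvw
      (Fin.castSucc_injective _ h)

end Chi

section FamilyM

open SimpleGraph

variable {V W : Type*} {x y : ℤ}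

lemma fDiff_cast [Finite V] (G : SimpleGraph V) : (fDiff G : ℤ) = chi G - G.cliqueNum := by
  rw [fDiff, Nat.cast_sub (cliqueNum_le_chi G)]

lemma inM_iff [Fintype V] (G : SimpleGraph V) :
    inM x y G ↔ (Fintype.card V : ℤ) < 3 * chi G - 2 * G.cliqueNum - x ∧
      (chi G : ℤ) - G.cliqueNum ≤ y := by
  rw [inM, fDiff_cast]
  constructor <;> rintro ⟨hcard, hf⟩ <;> exact ⟨by linarith, hf⟩

lemma card_mem_McardSet [Fintype W] {H : SimpleGraph W} (hH : inM x y H) :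
    Fintype.card W ∈ McardSet x y := by
  let e := H.overFinIso rfl
  refine ⟨H.overFin rfl, ?_⟩
  rw [inM_iff] at hH ⊢
  rwa [Fintype.card_fin, ← chi_congr e, ← e.cliqueNum_eq]

lemma not_inM_induce_of_minimal [Fintype V] {G : SimpleGraph V}
    (hmin : ∀ n ∈ McardSet x y, Fintype.card V ≤ n) {s : Set V} [Fintype s] {a : V}
    (ha : a ∉ s) : ¬ inM x y (G.induce s) :=
  fun h => (hmin _ (card_mem_McardSet h)).not_gt (Fintype.card_subtype_lt ha)

lemma inM_induce_of_chi_eq_of_cliqueNum_eq [Fintype V] {G : SimpleGraph V} (hG : inM x y G)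
    {s : Set V} [Fintype s] (hchi : chi (G.induce s) = chi G)
    (hω : (G.induce s).cliqueNum = G.cliqueNum) : inM x y (G.induce s) := by
  rw [inM_iff] at hG ⊢
  rw [hchi, hω]
  exact ⟨lt_of_le_of_lt (by exact_mod_cast Fintype.card_subtype_le _) hG.1, hG.2⟩

lemma inM_induce_compl_of_isIndepSet [Fintype V] {G : SimpleGraph V} (hG : inM x y G)
    {I : Finset V} (hI : G.IsIndepSet I) (hI3 : 3 ≤ I.card) [Fintype ↥(↑I : Set V)ᶜ]
    (hf : (fDiff (G.induce (↑I)ᶜ) : ℤ) ≤ y) : inM x y (G.induce (↑I)ᶜ) := by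
  have hχ := chi_le_chi_induce_compl_add_one hI
  have hω := G.cliqueNum_induce_le (↑I)ᶜ
  have hcard : Fintype.card ↥(↑I : Set V)ᶜ + I.card = Fintype.card V := by
    rw [Fintype.card_compl_set, ← Set.toFinset_card, Finset.toFinset_coe]
    have := Finset.card_le_univ I
    omega
  rw [fDiff_cast] at hf
  rw [inM_iff] at hG ⊢
  refine ⟨?_, hf⟩
  push_cast [← hcard] at hG ⊢
  linarith

lemma chi_induce_compl_eq_of_fDiff_lt [Finite V] {G : SimpleGraph V} {I : Set V}
    (hI : G.IsIndepSet I) (hf : fDiff G < fDiff (G.induce Iᶜ)) :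
    chi (G.induce Iᶜ) = chi G := by
  have hχ := chi_le_chi_induce_compl_add_one hI
  have hχ' := chi_le_of_hom (Embedding.induce (G := G) Iᶜ).toHom
  have hω := cliqueNum_le_cliqueNum_induce_compl_add_one hI
  have hf' : (fDiff G : ℤ) < fDiff (G.induce Iᶜ) := by exact_mod_cast hf
  rw [fDiff_cast, fDiff_cast] at hf'
  omega

end FamilyM

theorem stmt14_general {V : Type*} [Fintype V] (x y : ℤ)
    (G₀ : SimpleGraph V) (hG₀ : inM x y G₀)
    (hmin : ∀ n ∈ McardSet x y, Fintype.card V ≤ n) :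
    indepNum G₀ < 3 := by
  classical
  by_contra! h3
  obtain ⟨J, hJ⟩ := G₀ᶜ.exists_isNClique_cliqueNum
  obtain ⟨I, hIJ, hI3⟩ := Finset.exists_subset_card_eq (hJ.card_eq ▸ h3 : 3 ≤ J.card)
  have hI : G₀.IsIndepSet I := (SimpleGraph.isClique_compl _).1 (hJ.isClique.subset hIJ)
  by_cases hf : (fDiff (G₀.induce (↑I)ᶜ) : ℤ) ≤ y
  · obtain ⟨a, ha⟩ : ∃ a, a ∈ I := Finset.card_pos.1 (by omega)
    exact not_inM_induce_of_minimal hmin (not_not.2 ha)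
      (inM_induce_compl_of_isIndepSet hG₀ hI hI3.ge hf)
  obtain ⟨K, hK⟩ := G₀.exists_isNClique_cliqueNum
  obtain ⟨a, haI, haK⟩ := hI.exists_mem_notMem_of_isClique hK.isClique (by omega)
  have hχ := chi_induce_compl_eq_of_fDiff_lt hI (by have := hG₀.2; omega)
  have hIa : ((↑I)ᶜ : Set V) ≤ {a}ᶜ := Set.compl_subset_compl.2 (by simpa using haI)
  refine not_inM_induce_of_minimal hmin (s := {a}ᶜ) (a := a) (by simp)
    (inM_induce_of_chi_eq_of_cliqueNum_eq hG₀ ?_ ?_)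
  · exact le_antisymm (chi_le_of_hom (SimpleGraph.Embedding.induce _).toHom)
      (hχ ▸ chi_le_of_hom (G₀.induceHomOfLE hIa).toHom)
  · exact le_antisymm (G₀.cliqueNum_induce_le _)
      (hK.card_eq ▸ hK.isClique.card_le_cliqueNum_induce (by simpa using haK))

theorem stmt14 {V : Type*} [Fintype V] (x y : ℤ) (hx : 0 ≤ x)
    (G₀ : SimpleGraph V) (hG₀ : inM x y G₀)
    (hmin : ∀ n ∈ McardSet x y, Fintype.card V ≤ n) :
    indepNum G₀ < 3 :=
  stmt14_general x y G₀ hG₀ hmin
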